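/- For 2 ≤ a ≤ b, the number of falling maximal chains of length a in P(a,b)* equals 2·C(b−a, a−2). -/

import Mathlib

/-- `x` properly divides `y` in `ℕ²`: each coordinate is zero in both or strictly smaller. -/
def pdiv (x y : ℕ × ℕ) : Prop :=
  ((x.1 = 0 ∧ y.1 = 0) ∨ x.1 < y.1) ∧ ((x.2 = 0 ∧ y.2 = 0) ∨ x.2 < y.2)

/-- Strict proper divisibility on `ℕ²`. -/
def plt (x y : ℕ × ℕ) : Prop := x ≠ y ∧ pdiv x y

/-- The proper divisibility order on `ℕ²`. -/
def ple (x y : ℕ × ℕ) : Prop := x = y ∨ pdiv x y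

/-- `y` covers `x` in the proper divisibility order on `ℕ²`. -/
def pcov (x y : ℕ × ℕ) : Prop := plt x y ∧ ∀ z, plt x z → ¬ plt z y

/-- The poset `P(a,b)` of proper divisors of `(a,b)` together with `(a,b)` itself. -/
def Pset (a b : ℕ) : Set (ℕ × ℕ) := {z | z = (a, b) ∨ pdiv z (a, b)}

/-- A border element: of the form `(1,m)`, `(m,1)`, `(0,m)` or `(m,0)` with `m ≥ 2`. -/
def border (p : ℕ × ℕ) : Prop :=
  (p.1 = 1 ∧ 2 ≤ p.2) ∨ (p.2 = 1 ∧ 2 ≤ p.1) ∨ (p.1 = 0 ∧ 2 ≤ p.2) ∨ (p.2 = 0 ∧ 2 ≤ p.1)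

/-- Decrease each nonzero coordinate by one (the lexicographically least atom below). -/
def pdec (p : ℕ × ℕ) : ℕ × ℕ := (p.1 - 1, p.2 - 1)

/-- `p 0 = (a,b) → p 1 → ⋯ → p k = (0,0)` is a falling maximal chain of length `k`
in the dual poset `P(a,b)*`: each step `p (i+1) ⋖ p i` is a cover in proper divisibility,
no step goes to the least atom `pdec (p i)`, and no interior element is a border element. -/
def FallingChain (a b k : ℕ) (p : ℕ → ℕ × ℕ) : Prop :=
  p 0 = (a, b) ∧ p k = (0, 0) ∧
  (∀ i, i < k → pcov (p (i + 1)) (p i)) ∧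
  (∀ i, i + 2 ≤ k → p (i + 1) ≠ pdec (p i)) ∧
  (∀ i, 1 ≤ i → i + 2 ≤ k → ¬ border (p i))

/-- A falling chain normalized to be `(0,0)` beyond index `k` (so chains are counted once). -/
def NormFallingChain (a b k : ℕ) (p : ℕ → ℕ × ℕ) : Prop :=
  FallingChain a b k p ∧ ∀ i, k ≤ i → p i = (0, 0)

/-
The maximum coordinate drops at every step of a chain, so in a falling chain of length `a` from
`(a, b)` the interior elements avoid the border only if both their coordinates are at least `2`.
This pins the first coordinates to `a, a - 1, …, 2`, and excluding the steps to `pdec` makes the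
second coordinates `b = c₀, c₁, …, c_{a-2} ≥ 2` drop by at least `2` per step. The last atom below
`(2, c_{a-2})` can then be chosen in exactly two ways: `(1, 0)`, or one of `(0, 1)`, `(1, 1)`
according as `c_{a-2} = 2` or not. Finally `j ↦ c_{a-2-j} - (j + 2)` identifies the admissible
sequences `c` with the strictly increasing maps `Fin (a - 2) → Fin (b - a)`, of which there are
`C(b - a, a - 2)`.
-/

lemma pdiv.fst_lt {x y : ℕ × ℕ} (h : pdiv x y) (hx : 0 < x.1) : x.1 < y.1 := by
  unfold pdiv at h; omega

lemma pdiv.snd_lt {x y : ℕ × ℕ} (h : pdiv x y) (hx : 0 < x.2) : x.2 < y.2 := by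
  unfold pdiv at h; omega

lemma plt.max_lt {x y : ℕ × ℕ} (h : plt x y) : max x.1 x.2 < max y.1 y.2 := by
  obtain ⟨hne, h⟩ := h
  rw [ne_eq, Prod.ext_iff] at hne
  unfold pdiv at h
  omega

lemma plt_mk_iff {x₁ x₂ y₁ y₂ : ℕ} : plt (x₁, x₂) (y₁, y₂) ↔
    (x₁ ≠ y₁ ∨ x₂ ≠ y₂) ∧ (x₁ = 0 ∧ y₁ = 0 ∨ x₁ < y₁) ∧ (x₂ = 0 ∧ y₂ = 0 ∨ x₂ < y₂) := by
  simp only [plt, pdiv, ne_eq, Prod.mk.injEq, not_and_or]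

lemma pcov_mk_iff {x₁ x₂ y₁ y₂ : ℕ} : pcov (x₁, x₂) (y₁, y₂) ↔
    plt (x₁, x₂) (y₁, y₂) ∧ ∀ z₁ z₂, ¬ (plt (x₁, x₂) (z₁, z₂) ∧ plt (z₁, z₂) (y₁, y₂)) := by
  simp only [pcov, Prod.forall, not_and]

lemma pcov_of_succ_fst {x t s : ℕ} (hx : 1 ≤ x) (hts : t < s) : pcov (x, t) (x + 1, s) := by
  simp only [pcov_mk_iff, plt_mk_iff]
  exact ⟨by omega, fun _ _ => by omega⟩

lemma pcov_zero_iff {y : ℕ × ℕ} : pcov (0, 0) y ↔ y.1 ≤ 1 ∧ y.2 ≤ 1 ∧ y ≠ (0, 0) := by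
  obtain ⟨y₁, y₂⟩ := y
  simp only [pcov_mk_iff, plt_mk_iff, ne_eq, Prod.mk.injEq, true_and]
  constructor
  · rintro ⟨hlt, hmin⟩
    have h₁ := hmin 1 (y₂ - 1)
    have h₂ := hmin (y₁ - 1) 1
    omega
  · exact fun h => ⟨by omega, fun _ _ => by omega⟩

lemma snd_eq_two_of_pcov_zero_one {y₁ y₂ : ℕ} (h : pcov (0, 1) (y₁, y₂)) : y₂ = 2 := by
  rw [pcov_mk_iff] at h
  have := h.2 0 2
  simp only [plt_mk_iff, true_or, true_and] at h this
  omega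

lemma pcov_zero_one_two_two : pcov (0, 1) (2, 2) := by
  simp only [pcov_mk_iff, plt_mk_iff]
  exact ⟨by omega, fun _ _ => by omega⟩

def lastAtom (ε : Bool) (c : ℕ) : ℕ × ℕ :=
  if ε then (1, 0) else if c = 2 then (0, 1) else (1, 1)

lemma lastAtom_injective_left {ε ε' : Bool} {c c' : ℕ} (h : lastAtom ε c = lastAtom ε' c') :
    ε = ε' := by
  unfold lastAtom at h
  cases ε <;> cases ε' <;> split_ifs at h <;> simp_all

lemma lastTwoSteps_iff {c : ℕ} (hc : 2 ≤ c) {q : ℕ × ℕ} :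
    (pcov (0, 0) q ∧ pcov q (2, c) ∧ q ≠ pdec (2, c)) ↔ ∃ ε, q = lastAtom ε c := by
  constructor
  · rintro ⟨hbot, htop, hdec⟩
    obtain ⟨q₁, q₂⟩ := q
    rw [pcov_zero_iff] at hbot
    simp only [pdec, ne_eq, Prod.mk.injEq] at hbot hdec
    obtain ⟨rfl, rfl⟩ | ⟨rfl, rfl⟩ | ⟨rfl, rfl⟩ :
        (q₁ = 1 ∧ q₂ = 0) ∨ (q₁ = 0 ∧ q₂ = 1) ∨ (q₁ = 1 ∧ q₂ = 1) := by omega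
    · exact ⟨true, rfl⟩
    · have : c = 2 := snd_eq_two_of_pcov_zero_one htop
      exact ⟨false, by simp [lastAtom, this]⟩
    · have : c ≠ 2 := by omega
      exact ⟨false, by simp [lastAtom, this]⟩
  · rintro ⟨ε, rfl⟩
    unfold lastAtom
    split_ifs with hε hc2
    · exact ⟨pcov_zero_iff.2 (by simp), pcov_of_succ_fst le_rfl (by omega), by simp [pdec]; omega⟩
    · subst hc2
      exact ⟨pcov_zero_iff.2 (by simp), pcov_zero_one_two_two, by simp [pdec]⟩
    · exact ⟨pcov_zero_iff.2 (by simp), pcov_of_succ_fst le_rfl (by omega), by simp [pdec]; omega⟩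

lemma add_sub_le_of_forall_succ_lt {u : ℕ → ℕ} {j k : ℕ} (hjk : j ≤ k)
    (h : ∀ i, j ≤ i → i < k → u (i + 1) < u i) : u k + (k - j) ≤ u j := by
  induction k, hjk using Nat.le_induction with
  | base => simp
  | succ k hjk ih =>
    have hk := h k hjk (lt_add_one k)
    have := ih fun i hi hik => h i hi (by omega)
    omega

structure IsStaircase (a b : ℕ) (p : ℕ → ℕ × ℕ) : Prop where
  fst_eq : ∀ i ≤ a - 2, (p i).1 = a - i
  snd_zero : (p 0).2 = b
  snd_gap : ∀ i, i + 1 ≤ a - 2 → (p (i + 1)).2 + 2 ≤ (p i).2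
  two_le_snd : 2 ≤ (p (a - 2)).2
  atom : ∃ ε, p (a - 1) = lastAtom ε (p (a - 2)).2
  eq_zero : ∀ i, a ≤ i → p i = (0, 0)

namespace IsStaircase

variable {a b : ℕ} {p : ℕ → ℕ × ℕ}

lemma eq_mk (hp : IsStaircase a b p) {i : ℕ} (hi : i ≤ a - 2) : p i = (a - i, (p i).2) :=
  Prod.ext (hp.fst_eq i hi) rfl

lemma sub_le_snd (hp : IsStaircase a b p) {i : ℕ} (hi : i ≤ a - 2) : a - i ≤ (p i).2 := by
  have := add_sub_le_of_forall_succ_lt (u := fun i => (p i).2) hi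
    fun k _ hk => by have := hp.snd_gap k (by omega); omega
  have := hp.two_le_snd
  omega

lemma snd_add_strictAntiOn (hp : IsStaircase a b p) :
    StrictAntiOn (fun i => (p i).2 + i) (Set.Iic (a - 2)) :=
  strictAntiOn_Iic_of_succ_lt fun m hm => by
    have := hp.snd_gap m (Order.succ_le_of_lt hm)
    simp only [Order.succ_eq_add_one]
    omega

lemma lastTwoSteps (hp : IsStaircase a b p) (ha : 2 ≤ a) :
    pcov (0, 0) (p (a - 1)) ∧ pcov (p (a - 1)) (p (a - 2)) ∧ p (a - 1) ≠ pdec (p (a - 2)) := by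
  rw [hp.eq_mk le_rfl, show a - (a - 2) = 2 by omega]
  exact (lastTwoSteps_iff hp.two_le_snd).2 hp.atom

lemma pcov_succ (hp : IsStaircase a b p) {i : ℕ} (hi : i + 1 ≤ a - 2) :
    pcov (p (i + 1)) (p i) := by
  rw [hp.eq_mk hi, hp.eq_mk (i := i) (by omega), show a - i = a - (i + 1) + 1 by omega]
  exact pcov_of_succ_fst (by omega) (by have := hp.snd_gap i hi; omega)

lemma succ_ne_pdec (hp : IsStaircase a b p) {i : ℕ} (hi : i + 1 ≤ a - 2) :
    p (i + 1) ≠ pdec (p i) := by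
  rw [hp.eq_mk hi, hp.eq_mk (i := i) (by omega), pdec, ne_eq, Prod.ext_iff]
  have := hp.snd_gap i hi
  omega

end IsStaircase

namespace FallingChain

variable {a b : ℕ} {p : ℕ → ℕ × ℕ}

lemma two_le (hp : FallingChain a b a p) (ha : 2 ≤ a) (hab : a ≤ b) {i : ℕ} (hi : i ≤ a - 2) :
    2 ≤ (p i).1 ∧ 2 ≤ (p i).2 := by
  obtain ⟨h0, ha0, hcov, -, hbor⟩ := hp
  rcases Nat.eq_zero_or_pos i with rfl | hi₀
  · rw [h0]; exact ⟨ha, ha.trans hab⟩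
  have hmax := add_sub_le_of_forall_succ_lt (u := fun i => max (p i).1 (p i).2)
    (show i ≤ a by omega) fun k _ hk => (hcov k hk).1.max_lt
  have := hbor i hi₀ (by omega)
  simp only [ha0] at hmax
  unfold border at this
  omega

lemma fst_eq (hp : FallingChain a b a p) (ha : 2 ≤ a) (hab : a ≤ b) {i : ℕ} (hi : i ≤ a - 2) :
    (p i).1 = a - i := by
  obtain ⟨h0, -, hcov, -, -⟩ := id hp
  have hstep : ∀ k, k < a - 2 → (p (k + 1)).1 < (p k).1 := fun k hk =>
    (hcov k (by omega)).1.2.fst_lt (by have := hp.two_le ha hab (i := k + 1) hk; omega)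
  have h₁ := add_sub_le_of_forall_succ_lt (u := fun i => (p i).1) (Nat.zero_le i)
    fun k _ hk => hstep k (by omega)
  have h₂ := add_sub_le_of_forall_succ_lt (u := fun i => (p i).1) hi fun k _ hk => hstep k hk
  have := hp.two_le ha hab (le_refl (a - 2))
  simp only [h0] at h₁ h₂
  omega

lemma snd_gap (hp : FallingChain a b a p) (ha : 2 ≤ a) (hab : a ≤ b) {i : ℕ}
    (hi : i + 1 ≤ a - 2) : (p (i + 1)).2 + 2 ≤ (p i).2 := by
  obtain ⟨-, -, hcov, hdec, -⟩ := id hp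
  have hlt := (hcov i (by omega)).1.2.snd_lt (by have := hp.two_le ha hab hi; omega)
  have hne := hdec i (by omega)
  rw [pdec, ne_eq, Prod.ext_iff, hp.fst_eq ha hab (i := i) (by omega), hp.fst_eq ha hab hi] at hne
  omega

lemma exists_eq_lastAtom (hp : FallingChain a b a p) (ha : 2 ≤ a) (hab : a ≤ b) :
    ∃ ε, p (a - 1) = lastAtom ε (p (a - 2)).2 := by
  obtain ⟨-, ha0, hcov, hdec, -⟩ := id hp
  have hlast : p (a - 2) = (2, (p (a - 2)).2) :=
    Prod.ext (by rw [hp.fst_eq ha hab le_rfl]; omega) rfl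
  have hsucc : a - 2 + 1 = a - 1 := by omega
  refine (lastTwoSteps_iff (hp.two_le ha hab le_rfl).2).1 ⟨?_, ?_, ?_⟩
  · simpa [show a - 1 + 1 = a by omega, ha0] using hcov (a - 1) (by omega)
  · rw [← hlast, ← hsucc]; exact hcov _ (by omega)
  · rw [← hlast, ← hsucc]; exact hdec _ (by omega)

end FallingChain

lemma NormFallingChain.isStaircase {a b : ℕ} {p : ℕ → ℕ × ℕ} (hp : NormFallingChain a b a p)
    (ha : 2 ≤ a) (hab : a ≤ b) : IsStaircase a b p where
  fst_eq _ hi := hp.1.fst_eq ha hab hi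
  snd_zero := by rw [hp.1.1]
  snd_gap _ hi := hp.1.snd_gap ha hab hi
  two_le_snd := (hp.1.two_le ha hab le_rfl).2
  atom := hp.1.exists_eq_lastAtom ha hab
  eq_zero := hp.2

lemma IsStaircase.normFallingChain {a b : ℕ} {p : ℕ → ℕ × ℕ} (hp : IsStaircase a b p)
    (ha : 2 ≤ a) : NormFallingChain a b a p := by
  have hlast := hp.lastTwoSteps ha
  refine ⟨⟨Prod.ext (by simpa using hp.fst_eq 0 (by omega)) hp.snd_zero, hp.eq_zero a le_rfl,
    fun i hi => ?_, fun i hi => ?_, fun i hi₀ hi => ?_⟩, hp.eq_zero⟩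
  · obtain h | rfl | rfl : i + 1 ≤ a - 2 ∨ i = a - 2 ∨ i = a - 1 := by omega
    · exact hp.pcov_succ h
    · rw [show a - 2 + 1 = a - 1 by omega]; exact hlast.2.1
    · rw [show a - 1 + 1 = a by omega, hp.eq_zero a le_rfl]; exact hlast.1
  · obtain h | rfl : i + 1 ≤ a - 2 ∨ i = a - 2 := by omega
    · exact hp.succ_ne_pdec h
    · rw [show a - 2 + 1 = a - 1 by omega]; exact hlast.2.2
  · have := hp.sub_le_snd (i := i) (by omega)
    rw [hp.eq_mk (by omega), border]
    omega

/-- The second coordinate of the `i`-th element of the chain encoded by `f`, inverting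
`j ↦ c_{a-2-j} - (j + 2)`; for `i ≤ a - 2` the `else` branch is the case `i = 0`. -/
def stairHeight (a b : ℕ) (f : Fin (a - 2) ↪o Fin (b - a)) (i : ℕ) : ℕ :=
  if h : a - 2 - i < a - 2 then f ⟨a - 2 - i, h⟩ + (a - i) else b

def stairChain (a b : ℕ) (ε : Bool) (f : Fin (a - 2) ↪o Fin (b - a)) (i : ℕ) : ℕ × ℕ :=
  if i ≤ a - 2 then (a - i, stairHeight a b f i)
  else if i = a - 1 then lastAtom ε (stairHeight a b f (a - 2))
  else (0, 0)

section stairChain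

variable {a b : ℕ}

lemma stairHeight_zero (f : Fin (a - 2) ↪o Fin (b - a)) : stairHeight a b f 0 = b := by
  simp [stairHeight]

lemma stairHeight_sub (f : Fin (a - 2) ↪o Fin (b - a)) (j : Fin (a - 2)) :
    stairHeight a b f (a - 2 - j) = f j + (j + 2) := by
  have hj := j.isLt
  have hsub : a - 2 - (a - 2 - j) = j := by omega
  simp only [stairHeight, hsub, dif_pos hj, Fin.eta]
  omega

lemma stairHeight_succ_add_two_le (f : Fin (a - 2) ↪o Fin (b - a)) {i : ℕ}
    (hi : i + 1 ≤ a - 2) : stairHeight a b f (i + 1) + 2 ≤ stairHeight a b f i := by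
  rw [stairHeight, dif_pos (by omega), stairHeight]
  split_ifs with h
  · have : f ⟨a - 2 - (i + 1), by omega⟩ < f ⟨a - 2 - i, h⟩ :=
      f.lt_iff_lt.2 (Fin.mk_lt_mk.2 (by omega))
    rw [Fin.lt_def] at this
    omega
  · have := (f ⟨a - 2 - (i + 1), by omega⟩).isLt
    omega

lemma two_le_stairHeight (ha : 2 ≤ a) (hab : a ≤ b) (f : Fin (a - 2) ↪o Fin (b - a)) :
    2 ≤ stairHeight a b f (a - 2) := by
  unfold stairHeight
  split_ifs <;> omega

variable (ε : Bool) (f : Fin (a - 2) ↪o Fin (b - a))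

lemma stairChain_of_le {i : ℕ} (hi : i ≤ a - 2) :
    stairChain a b ε f i = (a - i, stairHeight a b f i) := by
  rw [stairChain, if_pos hi]

lemma stairChain_sub_one (ha : 2 ≤ a) :
    stairChain a b ε f (a - 1) = lastAtom ε (stairHeight a b f (a - 2)) := by
  rw [stairChain, if_neg (by omega), if_pos rfl]

lemma isStaircase_stairChain (ha : 2 ≤ a) (hab : a ≤ b) :
    IsStaircase a b (stairChain a b ε f) where
  fst_eq i hi := by rw [stairChain_of_le ε f hi]
  snd_zero := by rw [stairChain_of_le ε f (Nat.zero_le _), stairHeight_zero]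
  snd_gap i hi := by
    rw [stairChain_of_le ε f hi, stairChain_of_le ε f (by omega)]
    exact stairHeight_succ_add_two_le f hi
  two_le_snd := by
    rw [stairChain_of_le ε f le_rfl]
    exact two_le_stairHeight ha hab f
  atom := ⟨ε, by rw [stairChain_sub_one ε f ha, stairChain_of_le ε f le_rfl]⟩
  eq_zero i hi := by rw [stairChain, if_neg (by omega), if_neg (by omega)]

lemma stairChain_injective (ha : 2 ≤ a) :
    Function.Injective (fun x : Bool × (Fin (a - 2) ↪o Fin (b - a)) => stairChain a b x.1 x.2) := by
  rintro ⟨ε, f⟩ ⟨ε', f'⟩ (h : stairChain a b ε f = stairChain a b ε' f')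
  have hε : ε = ε' := by
    have := congrFun h (a - 1)
    rw [stairChain_sub_one _ _ ha, stairChain_sub_one _ _ ha] at this
    exact lastAtom_injective_left this
  suffices f = f' by rw [hε, this]
  refine RelEmbedding.ext fun j => Fin.ext ?_
  have := congrArg Prod.snd (congrFun h (a - 2 - j))
  rw [stairChain_of_le _ _ (by omega), stairChain_of_le _ _ (by omega)] at this
  simp only [stairHeight_sub] at this
  omega

end stairChain

lemma IsStaircase.exists_stairChain_eq {a b : ℕ} {p : ℕ → ℕ × ℕ} (ha : 2 ≤ a)
    (hp : IsStaircase a b p) : ∃ ε f, stairChain a b ε f = p := by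
  have hlt : ∀ {i i'}, i' < i → i ≤ a - 2 → (p i).2 + i < (p i').2 + i' := fun hii' hi =>
    hp.snd_add_strictAntiOn (Set.mem_Iic.2 (by omega)) (Set.mem_Iic.2 hi) hii'
  let g (j : Fin (a - 2)) : Fin (b - a) := ⟨(p (a - 2 - j)).2 - (j + 2), by
    have := hlt (i := a - 2 - j) (i' := 0) (by omega) (by omega)
    have := hp.sub_le_snd (i := a - 2 - j) (by omega)
    have := hp.snd_zero
    omega⟩
  have hg : StrictMono g := fun j k hjk => by
    rw [Fin.lt_def] at hjk ⊢
    have := hlt (i := a - 2 - j) (i' := a - 2 - k) (by omega) (by omega)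
    have := hp.sub_le_snd (i := a - 2 - j) (by omega)
    have := hp.sub_le_snd (i := a - 2 - k) (by omega)
    simp only [g]
    omega
  set f := OrderEmbedding.ofStrictMono g hg
  have hf (j : Fin (a - 2)) : (f j : ℕ) = (p (a - 2 - j)).2 - (j + 2) := rfl
  have hheight : ∀ i ≤ a - 2, stairHeight a b f i = (p i).2 := by
    intro i hi
    rcases Nat.eq_zero_or_pos i with rfl | hi₀
    · rw [stairHeight_zero, hp.snd_zero]
    · have := stairHeight_sub f ⟨a - 2 - i, by omega⟩
      rw [hf] at this
      simp only [Nat.sub_sub_self hi] at this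
      have := hp.sub_le_snd hi
      omega
  obtain ⟨ε, hε⟩ := hp.atom
  refine ⟨ε, f, funext fun i => ?_⟩
  rcases Nat.lt_or_ge (a - 2) i with hi | hi
  · rcases Nat.lt_or_ge i a with hia | hia
    · rw [show i = a - 1 by omega, stairChain_sub_one _ _ ha, hε, hheight _ le_rfl]
    · rw [stairChain, if_neg (by omega), if_neg (by omega), hp.eq_zero i hia]
  · rw [stairChain_of_le _ _ hi, hp.eq_mk hi, hheight i hi]

lemma card_orderEmbedding_fin (k n : ℕ) : Nat.card (Fin k ↪o Fin n) = n.choose k := by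
  rw [Nat.card_congr Set.powersetCard.ofFinEmbEquiv, Set.powersetCard.card, Nat.card_fin]

noncomputable def normFallingChainEquiv {a b : ℕ} (ha : 2 ≤ a) (hab : a ≤ b) :
    Bool × (Fin (a - 2) ↪o Fin (b - a)) ≃ {p : ℕ → ℕ × ℕ | NormFallingChain a b a p} :=
  Equiv.ofBijective
    (fun x => ⟨stairChain a b x.1 x.2, (isStaircase_stairChain x.1 x.2 ha hab).normFallingChain ha⟩)
    ⟨fun _ _ h => stairChain_injective ha (congrArg Subtype.val h), fun ⟨p, hp⟩ => by
      obtain ⟨ε, f, rfl⟩ := (hp.isStaircase ha hab).exists_stairChain_eq ha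
      exact ⟨(ε, f), rfl⟩⟩

theorem stmt12 (a b : ℕ) (ha : 2 ≤ a) (hab : a ≤ b) :
    {p : ℕ → ℕ × ℕ | NormFallingChain a b a p}.ncard = 2 * Nat.choose (b - a) (a - 2) := by
  rw [← Nat.card_coe_set_eq, ← Nat.card_congr (normFallingChainEquiv ha hab), Nat.card_prod,
    card_orderEmbedding_fin, Nat.card_eq_fintype_card, Fintype.card_bool]
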